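/- Let b(x) = exp(-(x-β)²) and s(x) = exp(-(x+β)²) for β > 0, and for γ ∈ ℝ let h_γ(x) = exp(-(x-γ)²). Then ∫_{-∞}^{∞} (d/dx (h_γ(x)·√(b(x)s(x))))² dx ≥ ∫_{-∞}^{∞} (d/dx (h_γ(x)·b(x)))² dx holds if and only if γ ≤ -β/2. -/

import Mathlib

open Real MeasureTheory Filter Topology

lemma integrable_sq_exp' {b : ℝ} (hb : 0 < b) :
    Integrable fun x : ℝ => x ^ 2 * exp (-b * x ^ 2) := by
  have h := integrable_rpow_mul_exp_neg_mul_sq hb (s := 2) (by norm_num)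
  simpa [Real.rpow_two] using h

lemma integral_sq_exp' {b : ℝ} (hb : 0 < b) :
    ∫ x : ℝ, x ^ 2 * exp (-b * x ^ 2) = Real.sqrt (π / b) / (2 * b) := by
  have hd : ∀ x : ℝ, HasDerivAt (fun x : ℝ => x * exp (-b * x ^ 2))
      (exp (-b * x ^ 2) - 2 * b * (x ^ 2 * exp (-b * x ^ 2))) x := by
    intro x
    have h1 : HasDerivAt (fun x : ℝ => -b * x ^ 2) (-b * (2 * x)) x := by
      simpa using (hasDerivAt_pow 2 x).const_mul (-b)
    have h2 := (hasDerivAt_id x).mul h1.exp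
    refine (h2.congr_deriv ?_)
    simp
    ring
  have ht : Tendsto (fun x : ℝ => x * exp (-b * x ^ 2)) (cocompact ℝ) (𝓝 0) := by
    have h := tendsto_rpow_abs_mul_exp_neg_mul_sq_cocompact hb 1
    simp only [Real.rpow_one] at h
    exact squeeze_zero_norm (fun x => le_of_eq (by
      rw [Real.norm_eq_abs, abs_mul, abs_of_pos (exp_pos _)])) h
  have hint : Integrable (fun x : ℝ =>
      exp (-b * x ^ 2) - 2 * b * (x ^ 2 * exp (-b * x ^ 2))) :=
    (integrable_exp_neg_mul_sq hb).sub ((integrable_sq_exp' hb).const_mul _)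
  have h0 : (∫ x : ℝ, (exp (-b * x ^ 2) - 2 * b * (x ^ 2 * exp (-b * x ^ 2))))
      = 0 - 0 :=
    integral_of_hasDerivAt_of_tendsto hd hint
      (ht.mono_left (cocompact_eq_atBot_atTop (α := ℝ) ▸ le_sup_left))
      (ht.mono_left (cocompact_eq_atBot_atTop (α := ℝ) ▸ le_sup_right))
  rw [integral_sub (integrable_exp_neg_mul_sq hb) ((integrable_sq_exp' hb).const_mul _),
    integral_const_mul, integral_gaussian] at h0
  have hb' : (2 : ℝ) * b ≠ 0 := by positivity
  rw [eq_div_iff hb']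
  linarith

lemma energy_integral (m c : ℝ) :
    ∫ x : ℝ, (deriv (fun x : ℝ => exp (-(2 * (x - m) ^ 2) + c)) x) ^ 2
      = Real.sqrt π * exp (2 * c) := by
  have hd : ∀ x : ℝ, HasDerivAt (fun x : ℝ => exp (-(2 * (x - m) ^ 2) + c))
      (-(4 * (x - m)) * exp (-(2 * (x - m) ^ 2) + c)) x := by
    intro x
    have h1 : HasDerivAt (fun x : ℝ => -(2 * (x - m) ^ 2) + c) (-(4 * (x - m))) x := by
      have h := ((((hasDerivAt_id x).sub_const m).pow 2).const_mul (-2)).add_const c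
      convert h using 1
      · rfl
      · rfl
      · funext y; simp only [id_eq, Pi.pow_apply]; ring
      · simp only [id_eq]; ring
    simpa [mul_comm] using h1.exp
  have step1 : (∫ x : ℝ, (deriv (fun x : ℝ => exp (-(2 * (x - m) ^ 2) + c)) x) ^ 2)
      = ∫ x : ℝ, (16 * exp (2 * c)) * ((x - m) ^ 2 * exp (-4 * (x - m) ^ 2)) := by
    congr 1
    funext x
    rw [(hd x).deriv, mul_pow]
    have hE : (exp (-(2 * (x - m) ^ 2) + c)) ^ 2
        = exp (-4 * (x - m) ^ 2) * exp (2 * c) := by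
      rw [sq, ← Real.exp_add, ← Real.exp_add]
      congr 1; ring
    rw [hE]; ring
  rw [step1, integral_const_mul]
  have step2 : (∫ x : ℝ, (x - m) ^ 2 * exp (-4 * (x - m) ^ 2))
      = ∫ x : ℝ, x ^ 2 * exp (-4 * x ^ 2) :=
    integral_sub_right_eq_self (fun y : ℝ => y ^ 2 * exp (-4 * y ^ 2)) m
  rw [step2, integral_sq_exp' (by norm_num : (0:ℝ) < 4)]
  have h4 : Real.sqrt (π / 4) = Real.sqrt π / 2 := by
    rw [show (π / 4 : ℝ) = π / 2 ^ 2 by ring, Real.sqrt_div pi_pos.le,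
      Real.sqrt_sq (by norm_num : (0:ℝ) ≤ 2)]
  rw [h4]; ring

/-- With b(x)=exp(-(x-β)²), s(x)=exp(-(x+β)²), h_γ(x)=exp(-(x-γ)²), the Dirichlet energy of
h_γ·√(b s) dominates that of h_γ·b iff γ ≤ -β/2. -/
theorem stmt0 (β γ : ℝ) (hβ : 0 < β) :
    ((∫ x : ℝ, (deriv (fun x : ℝ => exp (-(x - γ)^2) *
        Real.sqrt (exp (-(x - β)^2) * exp (-(x + β)^2))) x)^2)
      ≥ ∫ x : ℝ, (deriv (fun x : ℝ => exp (-(x - γ)^2) * exp (-(x - β)^2)) x)^2)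
    ↔ γ ≤ -β / 2 := by
  have e1 : (fun x : ℝ => exp (-(x - γ)^2) *
        Real.sqrt (exp (-(x - β)^2) * exp (-(x + β)^2)))
      = fun x : ℝ => exp (-(2 * (x - γ/2) ^ 2) + (-(γ^2/2) - β^2)) := by
    funext x
    rw [← Real.exp_add, ← Real.exp_half, ← Real.exp_add]
    congr 1; ring
  have e2 : (fun x : ℝ => exp (-(x - γ)^2) * exp (-(x - β)^2))
      = fun x : ℝ => exp (-(2 * (x - (γ+β)/2) ^ 2) + (-((γ-β)^2/2))) := by
    funext x; rw [← Real.exp_add]; congr 1; ring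
  rw [ge_iff_le, e1, e2, energy_integral, energy_integral,
    mul_le_mul_iff_right₀ (Real.sqrt_pos.mpr pi_pos), Real.exp_le_exp]
  constructor
  · intro h; nlinarith
  · intro h; nlinarith
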